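/- arXiv:1812.08038 — 4 statements merged into one kernel-verified Lean document; each statement's English description precedes it below -/
import Mathlib

section
/- Let y > 0 be a real number with y ≠ 1, let r ≥ 2 be an integer, and let a₀, a₁, …, a_r be vectors in ℤ² with a₀ + a₁ + … + a_r = 0. For each j ∈ {1, …, r} let A_j be the sequence consisting of the vector a₀ + a_j together with the vectors a_k for 1 ≤ k ≤ r, k ≠ j. Then Σ_{j=1}^{r} [a₀ ∧ a_j]⁻_y · μ⁺_y(A_j) = 0. -/
/-- The wedge product `a ∧ b = a₁b₂ − a₂b₁` of two vectors in `ℤ²`. -/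
def wedge (a b : ℤ × ℤ) : ℤ := a.1 * b.2 - a.2 * b.1

/-- `[α]⁻_y = (y^{α/2} − y^{−α/2})/(y^{1/2} − y^{−1/2})`. -/
noncomputable def brM (y : ℝ) (α : ℤ) : ℝ :=
  (y ^ ((α : ℝ) / 2) - y ^ (-(α : ℝ) / 2)) / (y ^ ((1 : ℝ) / 2) - y ^ (-(1 : ℝ) / 2))

/-- `[α]⁺_y = (y^{α/2} + y^{−α/2})/(y^{1/2} + y^{−1/2})`. -/
noncomputable def brP (y : ℝ) (α : ℤ) : ℝ :=
  (y ^ ((α : ℝ) / 2) + y ^ (-(α : ℝ) / 2)) / (y ^ ((1 : ℝ) / 2) + y ^ (-(1 : ℝ) / 2))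

/-- The sequence `A´_{ij}`: delete the `i`-th and `j`-th entries of `A` (for `i < j`)
and append their sum. -/
def pairReduce (A : List (ℤ × ℤ)) (i j : ℕ) : List (ℤ × ℤ) :=
  ((A.eraseIdx j).eraseIdx i) ++ [A.getD i 0 + A.getD j 0]

/-- Fuel-based implementation of `μ⁺_y`; with fuel `≥ A.length` it computes the
recursion `μ⁺_y(A) = 1` for `|A| ≤ 2`, `μ⁺_y(A) = [|a₁ ∧ a₂|]⁺_y` for `|A| = 3`, and
`μ⁺_y(A) = Σ_{i<j} μ⁺_y(A´_{ij})·μ⁺_y(A´´_{ij})` for `|A| ≥ 4`. -/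
noncomputable def muAux (y : ℝ) : ℕ → List (ℤ × ℤ) → ℝ
  | 0, _ => 1
  | n + 1, A =>
    if A.length ≤ 2 then 1
    else if A.length = 3 then brP y |wedge (A.getD 0 0) (A.getD 1 0)|
    else ∑ i ∈ Finset.range A.length, ∑ j ∈ Finset.Ioo i A.length,
      muAux y n (pairReduce A i j) *
        muAux y n [A.getD i 0, A.getD j 0, -(A.getD i 0 + A.getD j 0)]

/-- The refined multiplicity function `μ⁺_y(A)` of a finite sequence of vectors in `ℤ²`. -/
noncomputable def muPlus (y : ℝ) (A : List (ℤ × ℤ)) : ℝ := muAux y A.length A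

/-! With `λ = (log y)/2` one has `[α]⁻_y = sinh(αλ)/sinh λ` and `[α]⁺_y = cosh(αλ)/cosh λ`, so the
addition formulas give `[a+b]⁻[c]⁺ = [a]⁻[b+c]⁺ + [b]⁻[a-c]⁺`.

On balanced sequences `μ⁺_y` only depends on the underlying multiset, so we replace the
recursion over pairs of positions `i < j` by a sum over ordered pairs of distinct elements of a
multiset, and prove `Σ_{x ∈ M} [a₀ ∧ x]⁻ μ⁺((a₀ + x) :: M - x) = 0` for `a₀ + ΣM = 0` by strong
induction on `|M|`. Expanding `μ⁺((a₀ + x) :: M - x)` by the recursion, the pairs `{a₀ + x, q}`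
give, after symmetrising in `(x, q)` with the addition formula, half of
`S = Σ_{p ≠ q} [a₀ ∧ (p + q)]⁻ [p ∧ q]⁺ μ⁺((a₀ + p + q) :: M - p - q)`. In the pairs `{p, q}` not
involving `a₀ + x`, summing over `x` first leaves the same identity for the shorter multiset
`(p + q) :: M - p - q` without its term `x = p + q`, so by induction they give `-S/2`. The cases
`|M| ≤ 3` are direct, `|M| = 3` being the addition formula itself. -/

lemma brM_eq_sinh_div {y : ℝ} (hy : 0 < y) (α : ℤ) :
    brM y α = Real.sinh (α * (Real.log y / 2)) / Real.sinh (Real.log y / 2) := by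
  simp only [brM, Real.rpow_def_of_pos hy, Real.sinh_eq]
  field_simp

lemma brP_eq_cosh_div {y : ℝ} (hy : 0 < y) (α : ℤ) :
    brP y α = Real.cosh (α * (Real.log y / 2)) / Real.cosh (Real.log y / 2) := by
  simp only [brP, Real.rpow_def_of_pos hy, Real.cosh_eq]
  field_simp

lemma Real.sinh_add_mul_cosh (a b c : ℝ) :
    sinh (a + b) * cosh c = sinh a * cosh (b + c) + sinh b * cosh (a - c) := by
  simp only [sinh_add, cosh_add, cosh_sub]
  ring

lemma brM_add_mul_brP {y : ℝ} (hy : 0 < y) (a b c : ℤ) :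
    brM y (a + b) * brP y c = brM y a * brP y (b + c) + brM y b * brP y (a - c) := by
  simp only [brM_eq_sinh_div hy, brP_eq_cosh_div hy, div_mul_div_comm, ← add_div]
  push_cast
  rw [add_mul, add_mul, Real.sinh_add_mul_cosh, sub_mul]

lemma brM_zero (y : ℝ) : brM y 0 = 0 := by simp [brM]

lemma brM_neg (y : ℝ) (α : ℤ) : brM y (-α) = -brM y α := by
  simp only [brM, Int.cast_neg, neg_neg]
  ring

lemma brP_neg (y : ℝ) (α : ℤ) : brP y (-α) = brP y α := by
  simp only [brP, Int.cast_neg, neg_neg]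
  ring

lemma brP_abs (y : ℝ) (α : ℤ) : brP y |α| = brP y α := by
  rcases abs_choice α with h | h <;> simp only [h, brP_neg]

lemma wedge_comm (a b : ℤ × ℤ) : wedge a b = -wedge b a := by
  simp only [wedge]; ring

lemma abs_wedge_comm (a b : ℤ × ℤ) : |wedge a b| = |wedge b a| := by
  rw [wedge_comm, abs_neg]

@[simp] lemma wedge_self (a : ℤ × ℤ) : wedge a a = 0 := by
  simp only [wedge]; ring

lemma wedge_add_left (a b c : ℤ × ℤ) : wedge (a + b) c = wedge a c + wedge b c := by
  simp only [wedge, Prod.fst_add, Prod.snd_add]; ring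

lemma wedge_add_right (a b c : ℤ × ℤ) : wedge a (b + c) = wedge a b + wedge a c := by
  simp only [wedge, Prod.fst_add, Prod.snd_add]; ring

lemma wedge_neg_left (a b : ℤ × ℤ) : wedge (-a) b = -wedge a b := by
  simp only [wedge, Prod.fst_neg, Prod.snd_neg]; ring

lemma wedge_neg_right (a b : ℤ × ℤ) : wedge a (-b) = -wedge a b := by
  simp only [wedge, Prod.fst_neg, Prod.snd_neg]; ring

lemma List.sum_map_eq_sum_range_getD {α β : Type*} [Zero α] [AddCommMonoid β]
    (A : List α) (g : α → β) :
    (A.map g).sum = ∑ i ∈ Finset.range A.length, g (A.getD i 0) := by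
  induction A with
  | nil => rfl
  | cons a A ih =>
    rw [List.map_cons, List.sum_cons, ih, List.length_cons, Finset.sum_range_succ', add_comm]
    simp only [List.getD_cons_succ, List.getD_cons_zero]

namespace Multiset

lemma coe_eq_cons_coe_eraseIdx {α : Type*} {l : List α} {n : ℕ} (h : n < l.length) :
    (l : Multiset α) = l[n] ::ₘ (l.eraseIdx n : Multiset α) :=
  (coe_eq_coe.2 (List.getElem_cons_eraseIdx_perm h)).symm

variable {α β : Type*} [DecidableEq α]

def pairSum [AddCommMonoid β] (M : Multiset α) (f : α → α → β) : β :=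
  (M.map fun x => ((M.erase x).map (f x)).sum).sum

section AddCommMonoid

variable [AddCommMonoid β]

@[simp] lemma pairSum_singleton (a : α) (f : α → α → β) : pairSum {a} f = 0 := by
  simp [pairSum]

lemma pairSum_cons (a : α) (M : Multiset α) (f : α → α → β) :
    pairSum (a ::ₘ M) f = (M.map (f a)).sum + (M.map fun x => f x a).sum + pairSum M f := by
  have h : ∀ x ∈ M, (((a ::ₘ M).erase x).map (f x)).sum = f x a + ((M.erase x).map (f x)).sum :=
    fun x hx => by rw [erase_cons_tail_of_mem hx, map_cons, sum_cons]
  rw [pairSum, map_cons, sum_cons, erase_cons_head, map_congr rfl h, sum_map_add, pairSum,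
    add_assoc]

lemma pairSum_comm (M : Multiset α) (f : α → α → β) :
    pairSum M f = pairSum M fun x z => f z x := by
  induction M using Multiset.induction with
  | empty => rfl
  | cons a M ih => rw [pairSum_cons, pairSum_cons, ih, add_comm (M.map (f a)).sum]

lemma pairSum_add (M : Multiset α) (f g : α → α → β) :
    pairSum M (fun x z => f x z + g x z) = pairSum M f + pairSum M g := by
  simp only [pairSum, sum_map_add]

lemma pairSum_add_pairSum_self (M : Multiset α) (f : α → α → β) :
    pairSum M f + pairSum M f = pairSum M fun x z => f x z + f z x := by
  rw [pairSum_add, ← pairSum_comm M f]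

lemma pairSum_congr {M : Multiset α} {f g : α → α → β}
    (h : ∀ x ∈ M, ∀ z ∈ M.erase x, f x z = g x z) : pairSum M f = pairSum M g :=
  congrArg sum <| map_congr rfl fun x hx => congrArg sum <| map_congr rfl (h x hx)

lemma sum_map_pairSum_erase (M : Multiset α) (T : α → α → α → β) :
    (M.map fun x => pairSum (M.erase x) (T x)).sum =
      pairSum M fun p q => (((M.erase p).erase q).map fun x => T x p q).sum := by
  calc (M.map fun x => pairSum (M.erase x) (T x)).sum
      = pairSum M fun x p => (((M.erase x).erase p).map (T x p)).sum := rfl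
    _ = pairSum M fun p x => (((M.erase x).erase p).map (T x p)).sum := pairSum_comm _ _
    _ = (M.map fun p => pairSum (M.erase p) fun x q => T x p q).sum := by
      simp only [erase_comm M]; rfl
    _ = (M.map fun p => pairSum (M.erase p) fun q x => T x p q).sum :=
      congrArg sum <| map_congr rfl fun p _ => pairSum_comm _ _

lemma pairSum_coe [Zero α] (A : List α) (f : α → α → β) :
    pairSum (A : Multiset α) f = ∑ i ∈ Finset.range A.length, ∑ j ∈ Finset.Ioo i A.length,
      (f (A.getD i 0) (A.getD j 0) + f (A.getD j 0) (A.getD i 0)) := by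
  induction A with
  | nil => rfl
  | cons a A ih =>
    have shift : ∀ i, Finset.Ioo (i + 1) (A.length + 1) =
        (Finset.Ioo i A.length).map (addRightEmbedding 1) :=
      fun i => (Finset.map_add_right_Ioo i A.length 1).symm
    have shift₀ : Finset.Ioo 0 (A.length + 1) =
        (Finset.range A.length).map (addRightEmbedding 1) := by
      rw [Finset.range_eq_Ico, Finset.map_add_right_Ico, ← Finset.Ico_add_one_left_eq_Ioo]
    rw [← cons_coe, pairSum_cons, ih, List.length_cons, Finset.sum_range_succ', shift₀,
      Finset.sum_map, Finset.sum_add_distrib, map_coe, map_coe, sum_coe, sum_coe,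
      List.sum_map_eq_sum_range_getD, List.sum_map_eq_sum_range_getD]
    simp only [Finset.sum_map, shift, addRightEmbedding_apply, List.getD_cons_succ,
      List.getD_cons_zero]
    abel

end AddCommMonoid

lemma mul_pairSum [NonUnitalNonAssocSemiring β] (c : β) (M : Multiset α) (f : α → α → β) :
    c * pairSum M f = pairSum M fun x z => c * f x z := by
  simp only [pairSum, sum_map_mul_left]

lemma pairSum_neg [AddCommGroup β] (M : Multiset α) (f : α → α → β) :
    pairSum M (fun x z => -f x z) = -pairSum M f := by
  simp only [pairSum, sum_map_neg]

end Multiset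

open Multiset

/-- `μ⁺_y` on multisets, with fuel `n ≥ card M`. On a balanced triple all six ordered pairs have
the same `|x ∧ z|`, so the `card M = 3` branch is `[|a₁ ∧ a₂|]⁺_y` written symmetrically; the
last branch sums over ordered pairs, hence the factor `1/2`. -/
noncomputable def muPlusMultiset (y : ℝ) : ℕ → Multiset (ℤ × ℤ) → ℝ
  | 0, _ => 1
  | n + 1, M =>
    if card M ≤ 2 then 1
    else if card M = 3 then pairSum M (fun x z => brP y |wedge x z|) / 6
    else pairSum M (fun x z =>
      brP y |wedge x z| * muPlusMultiset y n ((x + z) ::ₘ (M.erase x).erase z)) / 2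

lemma muPlusMultiset_of_card_le_two (y : ℝ) (n : ℕ) {M : Multiset (ℤ × ℤ)} (h : card M ≤ 2) :
    muPlusMultiset y (n + 1) M = 1 := by
  rw [muPlusMultiset, if_pos h]

lemma muPlusMultiset_of_four_le_card (y : ℝ) (n : ℕ) {M : Multiset (ℤ × ℤ)} (h : 4 ≤ card M) :
    muPlusMultiset y (n + 1) M = pairSum M (fun x z =>
      brP y |wedge x z| * muPlusMultiset y n ((x + z) ::ₘ (M.erase x).erase z)) / 2 := by
  rw [muPlusMultiset, if_neg (by omega), if_neg (by omega)]

lemma muPlusMultiset_triple (y : ℝ) (n : ℕ) (p q : ℤ × ℤ) :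
    muPlusMultiset y (n + 1) (p ::ₘ q ::ₘ {-(p + q)}) = brP y |wedge p q| := by
  rw [muPlusMultiset, if_neg (by simp), if_pos (by simp)]
  simp only [pairSum_cons, pairSum_singleton, map_cons, map_singleton, sum_cons,
    sum_singleton, wedge_neg_left, wedge_neg_right, wedge_add_left, wedge_add_right, wedge_self,
    abs_neg, zero_add, add_zero]
  rw [abs_wedge_comm q p]
  ring

lemma muPlusMultiset_cons (y : ℝ) (n : ℕ) (b : ℤ × ℤ) {R : Multiset (ℤ × ℤ)} (hR : 3 ≤ card R) :
    muPlusMultiset y (n + 1) (b ::ₘ R) =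
      (R.map fun q => brP y |wedge b q| * muPlusMultiset y n ((b + q) ::ₘ R.erase q)).sum +
      pairSum R (fun p q =>
        brP y |wedge p q| * muPlusMultiset y n ((p + q) ::ₘ b ::ₘ (R.erase p).erase q)) / 2 := by
  rw [muPlusMultiset_of_four_le_card y n (by rw [card_cons]; omega), pairSum_cons,
    erase_cons_head]
  have hback : ∀ p ∈ R,
      brP y |wedge p b| * muPlusMultiset y n ((p + b) ::ₘ ((b ::ₘ R).erase p).erase b) =
      brP y |wedge b p| * muPlusMultiset y n ((b + p) ::ₘ R.erase p) := fun p hp => by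
    rw [erase_cons_tail_of_mem hp, erase_cons_head, abs_wedge_comm, add_comm]
  have hrest : ∀ p ∈ R, ∀ q ∈ R.erase p,
      brP y |wedge p q| * muPlusMultiset y n ((p + q) ::ₘ ((b ::ₘ R).erase p).erase q) =
      brP y |wedge p q| * muPlusMultiset y n ((p + q) ::ₘ b ::ₘ (R.erase p).erase q) :=
    fun p hp q hq => by rw [erase_cons_tail_of_mem hp, erase_cons_tail_of_mem hq]
  rw [map_congr rfl hback, pairSum_congr hrest]
  ring

lemma exists_coe_pairReduce {A : List (ℤ × ℤ)} {i j : ℕ} (hij : i < j) (hj : j < A.length) :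
    ∃ R : Multiset (ℤ × ℤ), (A : Multiset (ℤ × ℤ)) = A.getD i 0 ::ₘ A.getD j 0 ::ₘ R ∧
      (pairReduce A i j : Multiset (ℤ × ℤ)) = (A.getD i 0 + A.getD j 0) ::ₘ R := by
  have hi : i < (A.eraseIdx j).length := by rw [List.length_eraseIdx_of_lt hj]; omega
  refine ⟨(A.eraseIdx j).eraseIdx i, ?_, ?_⟩
  · rw [coe_eq_cons_coe_eraseIdx hj, coe_eq_cons_coe_eraseIdx hi,
      List.getElem_eraseIdx_of_lt hi hij, cons_swap, List.getD_eq_getElem _ _ hj,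
      List.getD_eq_getElem _ _ (hij.trans hj)]
  · rw [pairReduce, ← coe_add, add_comm, coe_singleton, singleton_add]

lemma muAux_triple (y : ℝ) {n : ℕ} (hn : 0 < n) (x z w : ℤ × ℤ) :
    muAux y n [x, z, w] = brP y |wedge x z| := by
  obtain ⟨m, rfl⟩ := Nat.exists_eq_add_one_of_ne_zero hn.ne'
  simp [muAux]

lemma muAux_pairReduce_mul_muAux_triple {y : ℝ} {n : ℕ} (hn : 0 < n)
    (ih : ∀ A : List (ℤ × ℤ), A.sum = 0 → A.length ≤ n → muAux y n A = muPlusMultiset y n A)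
    {A : List (ℤ × ℤ)} (hsum : A.sum = 0) (hlen : A.length ≤ n + 1) {i j : ℕ} (hij : i < j)
    (hj : j < A.length) :
    muAux y n (pairReduce A i j) * muAux y n [A.getD i 0, A.getD j 0, -(A.getD i 0 + A.getD j 0)] =
      brP y |wedge (A.getD i 0) (A.getD j 0)| *
        muPlusMultiset y n ((A.getD i 0 + A.getD j 0) ::ₘ
          ((A : Multiset (ℤ × ℤ)).erase (A.getD i 0)).erase (A.getD j 0)) := by
  obtain ⟨R, hA, hred⟩ := exists_coe_pairReduce hij hj
  have hsum' : (pairReduce A i j).sum = 0 := by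
    have := congrArg sum hA
    rw [sum_coe, hsum, sum_cons, sum_cons] at this
    rw [← sum_coe, hred, sum_cons, add_assoc, ← this]
  have hlen' : (pairReduce A i j).length ≤ n := by
    have := congrArg card hA
    rw [← coe_card, hred]
    simp only [coe_card, card_cons] at this ⊢
    omega
  rw [ih _ hsum' hlen', muAux_triple y hn, hred, mul_comm, hA, erase_cons_head, erase_cons_head]

lemma muAux_eq_muPlusMultiset (y : ℝ) (n : ℕ) (A : List (ℤ × ℤ)) (hsum : A.sum = 0)
    (hlen : A.length ≤ n) : muAux y n A = muPlusMultiset y n A := by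
  induction n generalizing A with
  | zero => rw [List.length_eq_zero_iff.1 (Nat.le_zero.1 hlen)]; rfl
  | succ n ih =>
    by_cases h2 : A.length ≤ 2
    · rw [muAux, if_pos h2, muPlusMultiset_of_card_le_two y n (by rwa [coe_card])]
    by_cases h3 : A.length = 3
    · obtain ⟨p, q, s, rfl⟩ := List.length_eq_three.1 h3
      obtain rfl : s = -(p + q) := by
        rw [eq_neg_iff_add_eq_zero, ← hsum]
        simp only [List.sum_cons, List.sum_nil]
        abel
      exact (muAux_triple y n.succ_pos p q _).trans (muPlusMultiset_triple y n p q).symm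
    set h : ℤ × ℤ → ℤ × ℤ → ℝ := fun x z =>
      brP y |wedge x z| * muPlusMultiset y n ((x + z) ::ₘ ((A : Multiset (ℤ × ℤ)).erase x).erase z)
    have hsymm : ∀ x z, h x z + h z x = 2 * h x z := fun x z => by
      simp only [h, abs_wedge_comm z x, add_comm z x, erase_comm]
      ring
    have hpair : ∀ i ∈ Finset.range A.length, ∀ j ∈ Finset.Ioo i A.length,
        muAux y n (pairReduce A i j) *
          muAux y n [A.getD i 0, A.getD j 0, -(A.getD i 0 + A.getD j 0)] =
        h (A.getD i 0) (A.getD j 0) := fun i _ j hj =>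
      muAux_pairReduce_mul_muAux_triple (by omega) ih hsum hlen (Finset.mem_Ioo.1 hj).1
        (Finset.mem_Ioo.1 hj).2
    rw [muAux, if_neg h2, if_neg h3, muPlusMultiset_of_four_le_card y n (by rw [coe_card]; omega)]
    change _ = pairSum (A : Multiset (ℤ × ℤ)) h / 2
    rw [pairSum_coe, Finset.sum_congr rfl fun i hi => Finset.sum_congr rfl (hpair i hi)]
    simp only [hsymm, ← Finset.mul_sum]
    ring

lemma muPlus_eq_muPlusMultiset (y : ℝ) {A : List (ℤ × ℤ)} (hA : A.sum = 0) :
    muPlus y A = muPlusMultiset y A.length A :=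
  muAux_eq_muPlusMultiset y _ A hA le_rfl

noncomputable def bracketSum (y : ℝ) (a₀ : ℤ × ℤ) (M : Multiset (ℤ × ℤ)) : ℝ :=
  (M.map fun x => brM y (wedge a₀ x) * muPlusMultiset y (card M) ((a₀ + x) ::ₘ M.erase x)).sum

lemma bracketSum_cons (y : ℝ) (a₀ b : ℤ × ℤ) (R : Multiset (ℤ × ℤ)) :
    bracketSum y a₀ (b ::ₘ R) =
      brM y (wedge a₀ b) * muPlusMultiset y (card R + 1) ((a₀ + b) ::ₘ R) +
      (R.map fun x => brM y (wedge a₀ x) *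
        muPlusMultiset y (card R + 1) ((a₀ + x) ::ₘ b ::ₘ R.erase x)).sum := by
  rw [bracketSum, card_cons, map_cons, sum_cons, erase_cons_head]
  congr 2
  exact map_congr rfl fun x hx => by rw [erase_cons_tail_of_mem hx]

lemma bracketSum_eq_zero_of_card_le_two {y : ℝ} {a₀ : ℤ × ℤ} {M : Multiset (ℤ × ℤ)}
    (hbal : a₀ + M.sum = 0) (hcard : card M ≤ 2) : bracketSum y a₀ M = 0 := by
  obtain h | h | h : card M = 0 ∨ card M = 1 ∨ card M = 2 := by omega
  · rw [card_eq_zero.1 h]; rfl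
  · obtain ⟨u, rfl⟩ := card_eq_one.1 h
    obtain rfl : u = -a₀ := by rw [eq_neg_iff_add_eq_zero, add_comm]; simpa using hbal
    simp [bracketSum, wedge_neg_right, brM_zero]
  · obtain ⟨u, v, rfl⟩ := card_eq_two.1 h
    obtain rfl : v = -(a₀ + u) := by
      rw [eq_neg_iff_add_eq_zero, ← hbal]
      simp only [insert_eq_cons, sum_cons, sum_singleton]
      abel
    simp [bracketSum, muPlusMultiset_of_card_le_two, wedge_neg_right, wedge_add_right, brM_neg]

lemma bracketSum_triple_eq_zero {y : ℝ} (hy : 0 < y) (a₀ u v : ℤ × ℤ) :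
    bracketSum y a₀ (u ::ₘ v ::ₘ {-(a₀ + u + v)}) = 0 := by
  set w := -(a₀ + u + v) with hw
  have h₁ : muPlusMultiset y 3 ((a₀ + u) ::ₘ v ::ₘ {w}) = brP y (wedge a₀ v + wedge u v) := by
    rw [← wedge_add_left, ← brP_abs]
    exact muPlusMultiset_triple y 2 (a₀ + u) v
  have h₂ : muPlusMultiset y 3 ((a₀ + v) ::ₘ u ::ₘ {w}) = brP y (wedge a₀ u - wedge u v) := by
    rw [sub_eq_add_neg, ← wedge_comm, ← wedge_add_left, ← brP_abs, hw, add_right_comm]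
    exact muPlusMultiset_triple y 2 (a₀ + v) u
  have h₃ : muPlusMultiset y 3 ((a₀ + w) ::ₘ u ::ₘ {v}) = brP y (wedge u v) := by
    rw [show (a₀ + w) ::ₘ u ::ₘ {v} = u ::ₘ v ::ₘ {-(u + v)} by
      rw [show a₀ + w = -(u + v) by rw [hw]; abel]
      exact (cons_swap _ _ _).trans (congrArg (u ::ₘ ·) (pair_comm _ _)),
      muPlusMultiset_triple, brP_abs]
  have hw₀ : wedge a₀ w = -(wedge a₀ u + wedge a₀ v) := by
    rw [hw, wedge_neg_right, wedge_add_right, wedge_add_right, wedge_self, zero_add]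
  have e₂ : (u ::ₘ v ::ₘ {w}).erase v = u ::ₘ {w} :=
    (erase_cons_tail_of_mem (mem_cons_self _ _)).trans (congrArg (u ::ₘ ·) (erase_cons_head _ _))
  have e₃ : (u ::ₘ v ::ₘ {w}).erase w = u ::ₘ {v} := by
    rw [erase_cons_tail_of_mem (by simp), erase_cons_tail_of_mem (by simp), erase_singleton]
    rfl
  simp only [bracketSum, card_cons, card_singleton, map_cons, map_singleton, sum_cons,
    sum_singleton]
  rw [erase_cons_head, e₂, e₃, h₁, h₂, h₃, hw₀, brM_neg]
  linear_combination -brM_add_mul_brP hy (wedge a₀ u) (wedge a₀ v) (wedge u v)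

lemma two_mul_pairSum_brM_mul_brP {y : ℝ} (hy : 0 < y) (a₀ : ℤ × ℤ) (M : Multiset (ℤ × ℤ))
    (F : ℤ × ℤ → ℤ × ℤ → ℝ) (hF : ∀ x z, F z x = F x z) :
    2 * pairSum M (fun x z => brM y (wedge a₀ x) * (brP y |wedge (a₀ + x) z| * F x z)) =
      pairSum M (fun x z => brM y (wedge a₀ x + wedge a₀ z) * (brP y (wedge x z) * F x z)) := by
  rw [two_mul, pairSum_add_pairSum_self]
  congr; funext x z
  rw [hF, brP_abs, brP_abs, wedge_add_left, wedge_add_left, wedge_comm z x, ← sub_eq_add_neg]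
  linear_combination -F z x * brM_add_mul_brP hy (wedge a₀ x) (wedge a₀ z) (wedge x z)

section Induction

variable {y : ℝ} {a₀ : ℤ × ℤ} {n : ℕ}
  (ih : ∀ M' : Multiset (ℤ × ℤ), card M' = n → a₀ + M'.sum = 0 → bracketSum y a₀ M' = 0)
include ih

lemma sum_map_brM_mul_pairSum_eq_neg {M : Multiset (ℤ × ℤ)} (hM : card M = n + 1)
    (hbal : a₀ + M.sum = 0) :
    (M.map fun x => brM y (wedge a₀ x) * pairSum (M.erase x) (fun p q => brP y |wedge p q| *
      muPlusMultiset y n ((p + q) ::ₘ (a₀ + x) ::ₘ ((M.erase x).erase p).erase q))).sum =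
    -pairSum M (fun p q => brM y (wedge a₀ p + wedge a₀ q) *
      (brP y (wedge p q) * muPlusMultiset y n ((a₀ + p + q) ::ₘ (M.erase p).erase q))) := by
  simp only [mul_pairSum]
  rw [sum_map_pairSum_erase, ← pairSum_neg]
  refine pairSum_congr fun p hp q hq => ?_
  set R := (M.erase p).erase q
  have hMR : M = p ::ₘ q ::ₘ R := by rw [cons_erase hq, cons_erase hp]
  have hR : card R + 1 = n := by rw [hMR, card_cons, card_cons] at hM; omega
  have hvanish := ih ((p + q) ::ₘ R) (by rw [card_cons, hR])
    (by rw [sum_cons, ← hbal, hMR, sum_cons, sum_cons]; abel)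
  rw [bracketSum_cons, hR, wedge_add_right, ← add_assoc] at hvanish
  have hswap : ∀ x ∈ R, brM y (wedge a₀ x) * (brP y |wedge p q| *
      muPlusMultiset y n ((p + q) ::ₘ (a₀ + x) ::ₘ ((M.erase x).erase p).erase q)) =
      brP y (wedge p q) *
        (brM y (wedge a₀ x) * muPlusMultiset y n ((a₀ + x) ::ₘ (p + q) ::ₘ R.erase x)) :=
    fun x _ => by
      rw [erase_comm M x p, erase_comm _ x q, cons_swap, brP_abs]
      ring
  rw [map_congr rfl hswap, sum_map_mul_left]
  linear_combination brP y (wedge p q) * hvanish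

lemma bracketSum_eq_zero_of_card_eq_succ (hy : 0 < y) (hn : 3 ≤ n) {M : Multiset (ℤ × ℤ)}
    (hM : card M = n + 1) (hbal : a₀ + M.sum = 0) : bracketSum y a₀ M = 0 := by
  set F : ℤ × ℤ → ℤ × ℤ → ℝ := fun x q =>
    muPlusMultiset y n ((a₀ + x + q) ::ₘ (M.erase x).erase q)
  have hF : ∀ x q, F q x = F x q := fun x q => by
    simp only [F, add_right_comm a₀ q x, erase_comm M q x]
  have hexpand : ∀ x ∈ M,
      brM y (wedge a₀ x) * muPlusMultiset y (n + 1) ((a₀ + x) ::ₘ M.erase x) =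
      ((M.erase x).map fun q => brM y (wedge a₀ x) * (brP y |wedge (a₀ + x) q| * F x q)).sum +
      brM y (wedge a₀ x) * pairSum (M.erase x) (fun p q => brP y |wedge p q| *
        muPlusMultiset y n ((p + q) ::ₘ (a₀ + x) ::ₘ ((M.erase x).erase p).erase q)) / 2 :=
    fun x hx => by
      rw [muPlusMultiset_cons y n _ (by rw [card_erase_of_mem hx, hM, Nat.pred_succ]; exact hn),
        sum_map_mul_left]
      ring
  rw [bracketSum, hM, map_congr rfl hexpand, sum_map_add, sum_map_div,
    sum_map_brM_mul_pairSum_eq_neg ih hM hbal]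
  change pairSum M _ + _ = _
  linear_combination two_mul_pairSum_brM_mul_brP hy a₀ M F hF / 2

end Induction

lemma bracketSum_eq_zero {y : ℝ} (hy : 0 < y) (a₀ : ℤ × ℤ) (M : Multiset (ℤ × ℤ))
    (hbal : a₀ + M.sum = 0) : bracketSum y a₀ M = 0 := by
  induction hM : card M using Nat.strong_induction_on generalizing M with
  | _ n ih =>
    rcases le_or_gt n 2 with hn | hn
    · exact bracketSum_eq_zero_of_card_le_two hbal (hM ▸ hn)
    obtain ⟨m, rfl⟩ : ∃ m, n = m + 1 := ⟨n - 1, by omega⟩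
    obtain h3 | h3 : m + 1 = 3 ∨ 3 ≤ m := by omega
    · obtain ⟨u, v, w, rfl⟩ := card_eq_three.1 (hM.trans h3)
      obtain rfl : w = -(a₀ + u + v) := by
        rw [eq_neg_iff_add_eq_zero, ← hbal]
        simp only [insert_eq_cons, sum_cons, sum_singleton]
        abel
      exact bracketSum_triple_eq_zero hy a₀ u v
    exact bracketSum_eq_zero_of_card_eq_succ (fun M' hM' hbal' => ih m (by omega) M' hbal' hM')
      hy h3 hM hbal

lemma Finset.coe_map_sort_erase {ι α : Type*} [LinearOrder ι] [DecidableEq α] (f : ι → α)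
    {s : Finset ι} {j : ι} (hj : j ∈ s) :
    ((((s.erase j).sort (· ≤ ·)).map f : List α) : Multiset α) = (s.val.map f).erase (f j) := by
  rw [← Multiset.map_coe, sort_eq, erase_val, ← Multiset.cons_erase hj, Multiset.map_cons,
    Multiset.erase_cons_head, Multiset.erase_cons_head]

theorem stmt1_general (y : ℝ) (hy0 : 0 < y) (r : ℕ)
    (a : ℕ → ℤ × ℤ) (hbal : ∑ s ∈ Finset.range (r + 1), a s = 0) :
    ∑ j ∈ Finset.Icc 1 r,
      brM y (wedge (a 0) (a j)) *
        muPlus y ((a 0 + a j) :: (((Finset.Icc 1 r).erase j).sort (· ≤ ·)).map a) = 0 := by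
  set M := (Finset.Icc 1 r).val.map a
  have hcard : card M = r := by simp [M]
  have hbalM : a 0 + M.sum = 0 := by
    rwa [Finset.range_eq_Ico, Finset.sum_eq_sum_Ico_succ_bot r.succ_pos, zero_add,
      Nat.succ_eq_add_one, Finset.Ico_add_one_right_eq_Icc] at hbal
  have hmu : ∀ j ∈ Finset.Icc 1 r,
      muPlus y ((a 0 + a j) :: (((Finset.Icc 1 r).erase j).sort (· ≤ ·)).map a) =
        muPlusMultiset y r ((a 0 + a j) ::ₘ M.erase (a j)) := fun j hj => by
    have hL := congrArg ((a 0 + a j) ::ₘ ·) (Finset.coe_map_sort_erase a hj)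
    rw [cons_coe] at hL
    have hjM : a j ∈ M := mem_map_of_mem a hj
    rw [muPlus_eq_muPlusMultiset, hL, ← coe_card, hL, card_cons, card_erase_add_one hjM, hcard]
    rw [← sum_coe, hL, sum_cons, add_assoc, sum_erase hjM, hbalM]
  calc _ = ∑ j ∈ Finset.Icc 1 r,
        brM y (wedge (a 0) (a j)) * muPlusMultiset y r ((a 0 + a j) ::ₘ M.erase (a j)) :=
        Finset.sum_congr rfl fun j hj => by rw [hmu j hj]
    _ = bracketSum y (a 0) M := by
      rw [bracketSum, hcard, map_map, Finset.sum_map_val]; rfl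
    _ = 0 := bracketSum_eq_zero hy0 (a 0) M hbalM

/-- if `a₀ + a₁ + … + a_r = 0` then
`Σ_{j=1}^{r} [a₀ ∧ a_j]⁻_y · μ⁺_y(A_j) = 0`, where
`A_j = (a₀ + a_j, (a_k)_{1 ≤ k ≤ r, k ≠ j})`. -/
theorem stmt1 (y : ℝ) (hy0 : 0 < y) (hy1 : y ≠ 1)
    (r : ℕ) (hr : 2 ≤ r)
    (a : ℕ → ℤ × ℤ) (hbal : ∑ s ∈ Finset.range (r + 1), a s = 0) :
    ∑ j ∈ Finset.Icc 1 r,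
      brM y (wedge (a 0) (a j)) *
        muPlus y ((a 0 + a j) :: (((Finset.Icc 1 r).erase j).sort (· ≤ ·)).map a) = 0 :=
  stmt1_general y hy0 r a hbal
end

section
/- Let R be a commutative ring, z ∈ R invertible, N ≥ 1 an integer, a₁, …, a_N vectors in ℤ², and set a₀ = −(a₁ + … + a_N). For each k ∈ {1, …, N} let C_k denote the sequence of the N − 1 vectors a_s with s ≠ k. Then Σ_{k=1}^{N} (z^{a₀ ∧ a_k} − z^{a_k ∧ a₀}) · Σ_{τ} z^{Λ_{C_k}(τ)} = 0, where the inner sum runs over all permutations τ of the index set of C_k. -/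
/-- `Λ(σ) = Σ_{s<t} a_{σ(s)} ∧ a_{σ(t)}` for a permutation `σ` of a linearly ordered
finite index set. -/
def Lam {ι : Type*} [LinearOrder ι] [Fintype ι] (a : ι → ℤ × ℤ) (σ : Equiv.Perm ι) : ℤ :=
  ∑ p ∈ Finset.univ.filter (fun p : ι × ι => p.1 < p.2), wedge (a (σ p.1)) (a (σ p.2))

open Finset Equiv

lemma wedge_neg_left_eq_wedge_sub (x y : ℤ × ℤ) : wedge (-x) y = wedge y (x - y) := by
  simp only [wedge, Prod.fst_neg, Prod.snd_neg, Prod.fst_sub, Prod.snd_sub]; ring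

lemma wedge_neg_right_eq_wedge_sub (x y : ℤ × ℤ) : wedge y (-x) = wedge (x - y) y := by
  simp only [wedge, Prod.fst_neg, Prod.snd_neg, Prod.fst_sub, Prod.snd_sub]; ring

lemma wedge_sum_right {κ : Type*} (x : ℤ × ℤ) (s : Finset κ) (f : κ → ℤ × ℤ) :
    wedge x (∑ i ∈ s, f i) = ∑ i ∈ s, wedge x (f i) := by
  simp [wedge, Prod.fst_sum, Prod.snd_sum, Finset.mul_sum, Finset.sum_sub_distrib]

lemma wedge_sum_left {κ : Type*} (x : ℤ × ℤ) (s : Finset κ) (f : κ → ℤ × ℤ) :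
    wedge (∑ i ∈ s, f i) x = ∑ i ∈ s, wedge (f i) x := by
  simp [wedge, Prod.fst_sum, Prod.snd_sum, Finset.sum_mul, Finset.sum_sub_distrib]

section LtPairSum

variable {ι κ M : Type*} [LinearOrder ι] [Fintype ι] [LinearOrder κ] [Fintype κ]
  [AddCommMonoid M]

def ltPairSum (g : ι → ι → M) : M :=
  ∑ q ∈ univ.filter (fun q : ι × ι => q.1 < q.2), g q.1 q.2

lemma ltPairSum_eq_sum_sum (g : ι → ι → M) :
    ltPairSum g = ∑ s, ∑ t, if s < t then g s t else 0 := by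
  rw [ltPairSum, Finset.sum_filter, Fintype.sum_prod_type]

lemma ltPairSum_comp_orderIso (e : κ ≃o ι) (g : ι → ι → M) :
    ltPairSum (fun s t => g (e s) (e t)) = ltPairSum g := by
  simp only [ltPairSum_eq_sum_sum]
  exact Fintype.sum_equiv e.toEquiv _ _ fun s =>
    Fintype.sum_equiv e.toEquiv _ _ fun t => by simp

lemma ltPairSum_eq_add_ltPairSum_subtype_ne (g : ι → ι → M) (p : ι) :
    ltPairSum g = ∑ t : {t // t ≠ p}, (if (t : ι) < p then g t p else g p t) +
      ltPairSum (fun s t : {t // t ≠ p} => g s t) := by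
  simp only [ltPairSum_eq_sum_sum]
  simp_rw [Fintype.sum_eq_add_sum_subtype_ne _ p, lt_irrefl, if_false, zero_add]
  rw [Finset.sum_add_distrib, ← add_assoc, ← Finset.sum_add_distrib]
  congr 1
  refine Finset.sum_congr rfl fun t _ => ?_
  rcases lt_or_gt_of_ne t.2 with h | h <;> simp [h, h.not_gt]

end LtPairSum

lemma lam_eq_ltPairSum {ι : Type*} [LinearOrder ι] [Fintype ι] (a : ι → ℤ × ℤ)
    (σ : Perm ι) : Lam a σ = ltPairSum fun s t => wedge (a (σ s)) (a (σ t)) := rfl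

section PermFiber

variable {ι : Type*} [DecidableEq ι]

def permFiberEquiv (p k : ι) (e : {t // t ≠ p} ≃ {s // s ≠ k}) :
    {σ : Perm ι // σ p = k} ≃ Perm {s // s ≠ k} :=
  (((optionSubtypeNe p).symm.equivCongr (Equiv.refl ι)).subtypeEquiv fun _ => Iff.rfl).trans
    ((optionSubtype k).trans (e.equivCongr (Equiv.refl _)))

lemma coe_permFiberEquiv_apply (p k : ι) (e : {t // t ≠ p} ≃ {s // s ≠ k})
    (σ : {σ : Perm ι // σ p = k}) (s : {s // s ≠ k}) :
    (permFiberEquiv p k e σ s : ι) = σ.1 (e.symm s) := rfl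

lemma sum_subtype_ne_comp_perm {M : Type*} [AddCommGroup M] [Fintype ι] {σ : Perm ι} {p k : ι}
    (h : σ p = k) (f : ι → M) : ∑ t : {t // t ≠ p}, f (σ t) = ∑ s, f s - f k := by
  rw [← Equiv.sum_comp σ f, Fintype.sum_eq_add_sum_subtype_ne _ p, h, add_sub_cancel_left]

end PermFiber

section Lam

variable {ι : Type*} [LinearOrder ι] [Fintype ι]

lemma card_subtype_ne (p : ι) : Fintype.card {t // t ≠ p} = Fintype.card ι - 1 := by
  simp [Fintype.card_subtype_compl]

noncomputable def orderIsoSubtypeNe (p k : ι) : {t // t ≠ p} ≃o {s // s ≠ k} :=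
  (Fintype.orderIsoFinOfCardEq _ (card_subtype_ne p)).symm.trans
    (Fintype.orderIsoFinOfCardEq _ (card_subtype_ne k))

lemma lam_eq_add_lam_permFiberEquiv (a : ι → ℤ × ℤ) {p k : ι}
    (e : {t // t ≠ p} ≃o {s // s ≠ k}) (σ : {σ : Perm ι // σ p = k}) :
    Lam a σ = ∑ t : {t // t ≠ p},
        (if (t : ι) < p then wedge (a (σ.1 t)) (a k) else wedge (a k) (a (σ.1 t))) +
      Lam (fun s : {s // s ≠ k} => a s) (permFiberEquiv p k e.toEquiv σ) := by
  rw [lam_eq_ltPairSum, ltPairSum_eq_add_ltPairSum_subtype_ne _ p, σ.2, lam_eq_ltPairSum,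
    ← ltPairSum_comp_orderIso e]
  simp [coe_permFiberEquiv_apply]

lemma lam_eq_add_lam_permFiberEquiv_of_isBot (a : ι → ℤ × ℤ) {p k : ι} (hp : IsBot p)
    (e : {t // t ≠ p} ≃o {s // s ≠ k}) (σ : {σ : Perm ι // σ p = k}) :
    Lam a σ = wedge (a k) (∑ s, a s - a k) +
      Lam (fun s : {s // s ≠ k} => a s) (permFiberEquiv p k e.toEquiv σ) := by
  rw [lam_eq_add_lam_permFiberEquiv a e σ, ← sum_subtype_ne_comp_perm σ.2, wedge_sum_right]
  simp only [(hp _).not_gt, if_false]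

lemma lam_eq_add_lam_permFiberEquiv_of_isTop (a : ι → ℤ × ℤ) {p k : ι} (hp : IsTop p)
    (e : {t // t ≠ p} ≃o {s // s ≠ k}) (σ : {σ : Perm ι // σ p = k}) :
    Lam a σ = wedge (∑ s, a s - a k) (a k) +
      Lam (fun s : {s // s ≠ k} => a s) (permFiberEquiv p k e.toEquiv σ) := by
  rw [lam_eq_add_lam_permFiberEquiv a e σ, ← sum_subtype_ne_comp_perm σ.2, wedge_sum_left]
  simp only [fun t : {t // t ≠ p} => (hp t).lt_of_ne t.2, if_true]

end Lam

section SumOverPerms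

variable {ι R : Type*} [LinearOrder ι] [Fintype ι]

lemma sum_zpow_lam_eq_sum_mul [Semiring R] (z : Rˣ) (a : ι → ℤ × ℤ) (p : ι) (c : ι → ℤ)
    (e : ∀ k, {t // t ≠ p} ≃ {s // s ≠ k})
    (hc : ∀ k (σ : {σ : Perm ι // σ p = k}),
      Lam a σ = c k + Lam (fun s : {s // s ≠ k} => a s) (permFiberEquiv p k (e k) σ)) :
    ∑ σ : Perm ι, ((z ^ Lam a σ : Rˣ) : R) =
      ∑ k, ((z ^ c k : Rˣ) : R) *
        ∑ τ : Perm {s // s ≠ k}, ((z ^ Lam (fun s : {s // s ≠ k} => a s) τ : Rˣ) : R) := by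
  rw [← Fintype.sum_fiberwise (fun σ : Perm ι => σ p)]
  refine Finset.sum_congr rfl fun k _ => ?_
  rw [Finset.mul_sum]
  exact Fintype.sum_equiv (permFiberEquiv p k (e k)) _ _ fun σ => by
    rw [hc k σ, zpow_add, Units.val_mul]

theorem sum_zpow_wedge_sub_mul_sum_zpow_lam_eq_zero [Ring R] (z : Rˣ) (a : ι → ℤ × ℤ) :
    ∑ k,
      (((z ^ wedge (-∑ s, a s) (a k) : Rˣ) : R) - ((z ^ wedge (a k) (-∑ s, a s) : Rˣ) : R)) *
        ∑ τ : Perm {s // s ≠ k}, ((z ^ Lam (fun s : {s // s ≠ k} => a s) τ : Rˣ) : R) = 0 := by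
  cases isEmpty_or_nonempty ι
  · simp
  obtain ⟨bot, hbot⟩ := Finite.exists_min (id : ι → ι)
  obtain ⟨top, htop⟩ := Finite.exists_max (id : ι → ι)
  simp only [wedge_neg_left_eq_wedge_sub, wedge_neg_right_eq_wedge_sub, sub_mul,
    Finset.sum_sub_distrib]
  rw [← sum_zpow_lam_eq_sum_mul z a bot _ (fun k => (orderIsoSubtypeNe bot k).toEquiv)
      fun k => lam_eq_add_lam_permFiberEquiv_of_isBot a hbot _,
    ← sum_zpow_lam_eq_sum_mul z a top _ (fun k => (orderIsoSubtypeNe top k).toEquiv)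
      fun k => lam_eq_add_lam_permFiberEquiv_of_isTop a htop _, sub_self]

end SumOverPerms

theorem stmt2_general (R : Type*) [CommRing R] (z : Rˣ) (N : ℕ)
    (a : Fin N → ℤ × ℤ) :
    ∑ k : Fin N,
      (((z ^ wedge (-∑ s : Fin N, a s) (a k) : Rˣ) : R) -
          ((z ^ wedge (a k) (-∑ s : Fin N, a s) : Rˣ) : R)) *
        ∑ τ : Equiv.Perm {s : Fin N // s ≠ k},
          ((z ^ Lam (fun s : {s : Fin N // s ≠ k} => a s.1) τ : Rˣ) : R) = 0 :=
  sum_zpow_wedge_sub_mul_sum_zpow_lam_eq_zero z a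

/-- with `a₀ = −(a₁ + … + a_N)`,
`Σ_k (z^{a₀ ∧ a_k} − z^{a_k ∧ a₀}) · Σ_τ z^{Λ_{C_k}(τ)} = 0`, where `C_k` is the
sequence of the vectors `a_s`, `s ≠ k`, and `τ` runs over permutations of its
index set. -/
theorem stmt2 (R : Type*) [CommRing R] (z : Rˣ) (N : ℕ) (hN : 1 ≤ N)
    (a : Fin N → ℤ × ℤ) :
    ∑ k : Fin N,
      (((z ^ wedge (-∑ s : Fin N, a s) (a k) : Rˣ) : R) -
          ((z ^ wedge (a k) (-∑ s : Fin N, a s) : Rˣ) : R)) *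
        ∑ τ : Equiv.Perm {s : Fin N // s ≠ k},
          ((z ^ Lam (fun s : {s : Fin N // s ≠ k} => a s.1) τ : Rˣ) : R) = 0 :=
  stmt2_general R z N a
end

section
/- Let y > 0 be a real number and let A = (a₁, …, a_r) be a balanced finite sequence of vectors in ℤ² (i.e. a₁ + … + a_r = 0). Then for every permutation σ of {1, …, r}, μ⁺_y(a_{σ(1)}, …, a_{σ(r)}) = μ⁺_y(a₁, …, a_r); that is, μ⁺_y(A) does not depend on the order of the sequence A. -/
/-!
Induction on the length of `A`. For a balanced triple `(a, b, c)` the wedges `a ∧ b`, `b ∧ c`,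
`c ∧ a` coincide, so `|a ∧ b|` does not depend on the order. For `r ≥ 4`, reordering `A` permutes
the unordered index pairs `{i, j}`, and the term of a pair only depends on `A` and the pair:
`A'_{ij}` is determined up to order by them, and it is balanced and shorter than `A`.
-/

open Finset
open scoped List

theorem sum_range_Ioo_eq_sum_offDiag {M : Type*} [AddCommMonoid M] (r : ℕ) (g : ℕ → ℕ → M) :
    ∑ i ∈ range r, ∑ j ∈ Ioo i r, g i j =
      ∑ p ∈ (univ : Finset (Fin r)).offDiag with p.1 < p.2, g p.1 p.2 := by
  have hoff : ((univ : Finset (Fin r)).offDiag.filter fun p => p.1 < p.2) =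
      (univ : Finset (Fin r × Fin r)).filter fun p => p.1 < p.2 := by
    ext p; simpa using ne_of_lt
  have hIoo : ∀ i, Ioo i r = (range r).filter (i < ·) := fun i => by
    ext j; simp [and_comm]
  rw [hoff, sum_filter, Fintype.sum_prod_type, ← Fin.sum_univ_eq_sum_range]
  simp_rw [hIoo, sum_filter, ← Fin.sum_univ_eq_sum_range, Fin.lt_def]

theorem sum_offDiag_lt_comp_equiv {ι κ M : Type*} [LinearOrder ι] [LinearOrder κ] [Fintype ι]
    [Fintype κ] [AddCommMonoid M] (e : κ ≃ ι) (f : ι → ι → M) (hf : ∀ i j, f i j = f j i) :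
    ∑ p ∈ (univ : Finset κ).offDiag with p.1 < p.2, f (e p.1) (e p.2) =
      ∑ p ∈ (univ : Finset ι).offDiag with p.1 < p.2, f p.1 p.2 := by
  let F : Sym2 ι → M := Sym2.lift ⟨f, hf⟩
  calc _ = ∑ z ∈ (univ : Finset κ).sym2 with ¬z.IsDiag, F (z.map e) :=
        (sum_sym2_filter_not_isDiag _ (F ∘ Sym2.map e)).symm
    _ = ∑ z ∈ (univ : Finset ι).sym2 with ¬z.IsDiag, F z :=
        sum_nbij' (Sym2.map e) (Sym2.map e.symm) (by simp [Sym2.isDiag_map e.injective])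
          (by simp [Sym2.isDiag_map e.symm.injective]) (by simp [Sym2.map_map])
          (by simp [Sym2.map_map]) (fun _ _ => rfl)
    _ = _ := sum_sym2_filter_not_isDiag _ F

theorem wedge_swap (a b : ℤ × ℤ) : wedge b a = -wedge a b := by
  unfold wedge; ring

theorem wedge_rotate {a b c : ℤ × ℤ} (h : a + b + c = 0) : wedge b c = wedge a b := by
  obtain rfl : c = -(a + b) := eq_neg_of_add_eq_zero_right h
  simp only [wedge, Prod.fst_neg, Prod.snd_neg, Prod.fst_add, Prod.snd_add]
  ring

theorem abs_wedge_eq_of_perm {a b c x y z : ℤ × ℤ} (hsum : a + b + c = 0)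
    (h : [x, y, z] ~ [a, b, c]) : |wedge x y| = |wedge a b| := by
  have hsum' : b + c + a = 0 := by rw [← hsum]; abel
  -- the six orderings of `[a, b, c]`
  have hcases := List.mem_permutations.2 h
  simp only [List.permutations, List.permutationsAux, List.permutationsAux.rec,
    List.permutationsAux2, List.foldr_cons, List.foldr_nil, id_eq, List.mem_cons, List.cons.injEq,
    and_true, List.not_mem_nil, or_false] at hcases
  rcases hcases with ⟨rfl, rfl, -⟩ | ⟨rfl, rfl, -⟩ | ⟨rfl, rfl, -⟩ | ⟨rfl, rfl, -⟩ |
    ⟨rfl, rfl, -⟩ | ⟨rfl, rfl, -⟩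
  · rfl
  · rw [wedge_swap, abs_neg]
  · rw [wedge_swap, abs_neg, wedge_rotate hsum]
  · rw [wedge_rotate hsum]
  · rw [wedge_rotate hsum', wedge_rotate hsum]
  · rw [wedge_swap, abs_neg, wedge_rotate hsum', wedge_rotate hsum]

section pairReduce

variable {A B : List (ℤ × ℤ)} {i j k l : ℕ}

theorem exists_perm_pairReduce (hij : i < j) (hj : j < A.length) :
    ∃ rest, A ~ A[i] :: A[j] :: rest ∧ pairReduce A i j ~ (A[i] + A[j]) :: rest := by
  have hi : i < (A.eraseIdx j).length := by rw [List.length_eraseIdx_of_lt hj]; omega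
  refine ⟨(A.eraseIdx j).eraseIdx i, ?_, ?_⟩
  · calc A ~ A[j] :: A.eraseIdx j := (List.getElem_cons_eraseIdx_perm hj).symm
      _ ~ A[j] :: (A.eraseIdx j)[i] :: (A.eraseIdx j).eraseIdx i :=
        (List.getElem_cons_eraseIdx_perm hi).symm.cons _
      _ ~ A[i] :: A[j] :: (A.eraseIdx j).eraseIdx i := by
        rw [List.getElem_eraseIdx_of_lt hi hij]; exact .swap _ _ _
  · rw [pairReduce, A.getD_eq_getElem 0 (hij.trans hj), A.getD_eq_getElem 0 hj]
    exact List.perm_append_singleton _ _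

theorem length_pairReduce (hij : i < j) (hj : j < A.length) :
    (pairReduce A i j).length + 1 = A.length := by
  obtain ⟨rest, hA, hR⟩ := exists_perm_pairReduce hij hj
  rw [hA.length_eq, hR.length_eq]
  rfl

theorem sum_pairReduce (hij : i < j) (hj : j < A.length) : (pairReduce A i j).sum = A.sum := by
  obtain ⟨rest, hA, hR⟩ := exists_perm_pairReduce hij hj
  rw [hA.sum_eq, hR.sum_eq, List.sum_cons, List.sum_cons, List.sum_cons, add_assoc]

theorem pairReduce_perm_pairReduce (h : A ~ B) (hij : i < j) (hj : j < A.length) (hkl : k < l)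
    (hl : l < B.length) (hpair : A[i] = B[k] ∧ A[j] = B[l] ∨ A[i] = B[l] ∧ A[j] = B[k]) :
    pairReduce A i j ~ pairReduce B k l := by
  obtain ⟨restA, hA, hRA⟩ := exists_perm_pairReduce hij hj
  obtain ⟨restB, hB, hRB⟩ := exists_perm_pairReduce hkl hl
  have hAB : A[i] :: A[j] :: restA ~ B[k] :: B[l] :: restB := hA.symm.trans (h.trans hB)
  obtain ⟨hsum, hrest⟩ : A[i] + A[j] = B[k] + B[l] ∧ restA ~ restB := by
    rcases hpair with ⟨h₁, h₂⟩ | ⟨h₁, h₂⟩ <;> rw [h₁, h₂] at hAB ⊢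
    · exact ⟨rfl, (List.perm_cons _).1 ((List.perm_cons _).1 hAB)⟩
    · exact ⟨add_comm _ _, (List.perm_cons _).1 ((List.perm_cons _).1 (hAB.trans (.swap _ _ _)))⟩
  exact hRA.trans (hsum ▸ hrest.cons _) |>.trans hRB.symm

end pairReduce

section muPlus

variable (y : ℝ) {A B : List (ℤ × ℤ)}

theorem muAux_eq_of_length_le :
    ∀ {n m : ℕ} {A : List (ℤ × ℤ)}, A.length ≤ n → A.length ≤ m → muAux y n A = muAux y m A
  | 0, m, A, hn, _ => by
    obtain rfl := List.length_eq_zero_iff.1 (Nat.le_zero.1 hn)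
    cases m <;> rfl
  | n + 1, 0, A, _, hm => by
    obtain rfl := List.length_eq_zero_iff.1 (Nat.le_zero.1 hm)
    rfl
  | n + 1, m + 1, A, hn, hm => by
    rw [muAux, muAux]
    split_ifs
    · rfl
    · rfl
    refine sum_congr rfl fun i _ => sum_congr rfl fun j hj => ?_
    obtain ⟨hij, hj⟩ := mem_Ioo.1 hj
    have hlen := length_pairReduce hij hj
    rw [muAux_eq_of_length_le (m := m) (by omega) (by omega),
      muAux_eq_of_length_le (n := n) (m := m) (by simp; omega) (by simp; omega)]

theorem muAux_eq_muPlus {n : ℕ} (h : A.length ≤ n) : muAux y n A = muPlus y A :=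
  muAux_eq_of_length_le y h le_rfl

theorem muPlus_of_length_le_two (h : A.length ≤ 2) : muPlus y A = 1 := by
  rw [← muAux_eq_muPlus y (Nat.le_succ _), muAux, if_pos h]

theorem muPlus_triple (a b c : ℤ × ℤ) : muPlus y [a, b, c] = brP y |wedge a b| := rfl

theorem muPlus_eq_sum (h : 4 ≤ A.length) :
    muPlus y A = ∑ p ∈ (univ : Finset (Fin A.length)).offDiag with p.1 < p.2,
      muPlus y (pairReduce A p.1 p.2) * brP y |wedge A[p.1] A[p.2]| := by
  rw [← muAux_eq_muPlus y (Nat.le_succ _), muAux, if_neg (by omega), if_neg (by omega),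
    sum_range_Ioo_eq_sum_offDiag]
  refine sum_congr rfl fun p hp => ?_
  have hlen := length_pairReduce (mem_filter.1 hp).2 p.2.2
  rw [muAux_eq_muPlus y (by omega), muAux_eq_muPlus y (by simp; omega), muPlus_triple,
    A.getD_eq_getElem 0 p.1.2, A.getD_eq_getElem 0 p.2.2]
  rfl

theorem muPlus_eq_of_perm_of_length_eq_three (h : A ~ B) (h3 : A.length = 3) (hsum : A.sum = 0) :
    muPlus y A = muPlus y B := by
  obtain ⟨a, b, c, rfl⟩ := List.length_eq_three.1 h3
  obtain ⟨x, x', z, rfl⟩ := List.length_eq_three.1 (h.length_eq ▸ h3)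
  rw [muPlus_triple, muPlus_triple, abs_wedge_eq_of_perm _ h.symm]
  simpa [add_assoc] using hsum

theorem muPlus_eq_of_perm_of_four_le (h : A ~ B) (h4 : 4 ≤ A.length) (hsum : A.sum = 0)
    (ih : ∀ C D : List (ℤ × ℤ), C ~ D → C.length < A.length → C.sum = 0 →
      muPlus y C = muPlus y D) :
    muPlus y A = muPlus y B := by
  let e : Fin A.length ≃ Fin B.length :=
    ⟨h.idxBij, h.symm.idxBij, fun _ => h.idxBij_symm_idxBij, fun _ => h.idxBij_idxBij_symm⟩
  have he : ∀ i, B[e i] = A[i] := h.getElem_idxBij_eq_getElem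
  -- `pairReduce B k l` is `B'_{kl}` only when `k < l`
  let K : Fin B.length → Fin B.length → ℝ := fun k l =>
    muPlus y (pairReduce B (min k l) (max k l)) * brP y |wedge B[k] B[l]|
  have hK : ∀ k l, K k l = K l k := fun k l => by
    simp only [K, min_comm (k : ℕ), max_comm (k : ℕ), wedge_swap B[k], abs_neg]
  calc muPlus y A
      = ∑ p ∈ (univ : Finset (Fin A.length)).offDiag with p.1 < p.2, K (e p.1) (e p.2) := by
        rw [muPlus_eq_sum y h4]
        refine sum_congr rfl fun p hp => ?_
        have hlt := (mem_filter.1 hp).2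
        have hne : e p.1 ≠ e p.2 := e.injective.ne hlt.ne
        have hlen := length_pairReduce hlt p.2.2
        simp only [K, he]
        congr 1
        refine ih _ _ (pairReduce_perm_pairReduce h hlt p.2.2 ?_ (max_lt (e p.1).2 (e p.2).2) ?_)
          (by omega) (by rw [sum_pairReduce hlt p.2.2, hsum])
        · exact min_lt_max.2 (Fin.val_ne_of_ne hne)
        · rcases hne.lt_or_gt with hlt' | hlt' <;> have hle := Fin.val_le_of_le hlt'.le
          · simp only [min_eq_left hle, max_eq_right hle]
            exact .inl ⟨(he _).symm, (he _).symm⟩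
          · simp only [min_eq_right hle, max_eq_left hle]
            exact .inr ⟨(he _).symm, (he _).symm⟩
    _ = ∑ p ∈ (univ : Finset (Fin B.length)).offDiag with p.1 < p.2, K p.1 p.2 :=
        sum_offDiag_lt_comp_equiv e K hK
    _ = muPlus y B := by
        rw [muPlus_eq_sum y (h.length_eq ▸ h4)]
        refine sum_congr rfl fun p hp => ?_
        have hlt := (mem_filter.1 hp).2
        have hle := Fin.val_le_of_le hlt.le
        simp only [K, min_eq_left hle, max_eq_right hle]

theorem muPlus_eq_of_perm (h : A ~ B) (hsum : A.sum = 0) : muPlus y A = muPlus y B := by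
  obtain ⟨n, hn⟩ : ∃ n, A.length = n := ⟨_, rfl⟩
  induction n using Nat.strong_induction_on generalizing A B with
  | _ n ih =>
    obtain h2 | h3 | h4 : A.length ≤ 2 ∨ A.length = 3 ∨ 4 ≤ A.length := by omega
    · rw [muPlus_of_length_le_two y h2, muPlus_of_length_le_two y (h.length_eq ▸ h2)]
    · exact muPlus_eq_of_perm_of_length_eq_three y h h3 hsum
    · exact muPlus_eq_of_perm_of_four_le y h h4 hsum fun C D hCD hC hCsum =>
        ih _ (hn ▸ hC) hCD hCsum rfl

end muPlus

theorem stmt9_general (y : ℝ) (A : List (ℤ × ℤ)) (hbal : A.sum = 0)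
    (σ : Equiv.Perm (Fin A.length)) :
    muPlus y (List.ofFn (fun i => A.get (σ i))) = muPlus y A := by
  have hperm : A ~ List.ofFn (fun i => A.get (σ i)) := by
    simpa only [List.ofFn_get, Function.comp_def] using (Equiv.Perm.ofFn_comp_perm σ A.get).symm
  exact (muPlus_eq_of_perm y hperm hbal).symm

/-- for a balanced sequence `A` of vectors in `ℤ²`, the value
`μ⁺_y(A)` does not change under any permutation of the entries of `A`. -/
theorem stmt9 (y : ℝ) (hy0 : 0 < y) (A : List (ℤ × ℤ)) (hbal : A.sum = 0)
    (σ : Equiv.Perm (Fin A.length)) :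
    muPlus y (List.ofFn (fun i => A.get (σ i))) = muPlus y A :=
  stmt9_general y A hbal σ
end

section
/- Let A = (a₁, …, a_r) be a finite sequence of vectors in ℤ² with r ≥ 3. Then there exists a Laurent polynomial P ∈ ℤ[t, t⁻¹] such that for every real number y > 0, μ⁺_y(A) = P(y^{1/2}) / (y^{1/2} + y^{−1/2})^{r−2}. (In particular, an unmarked vertex of valency j contributes at most j − 3 factors y^{1/2} + y^{−1/2} to the denominator of its refined multiplicity [|a₁∧a₂|]⁻_y · μ⁺_y(A') with A' of length j − 1.) -/
open LaurentPolynomial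

lemma rpow_intCast_div_two {y : ℝ} (hy : 0 < y) (α : ℤ) :
    y ^ ((α : ℝ) / 2) = (y ^ ((1 : ℝ) / 2)) ^ α := by
  rw [← Real.rpow_intCast, ← Real.rpow_mul hy.le]
  ring_nf

lemma pairReduce_length {A : List (ℤ × ℤ)} {i j : ℕ} (hij : i < j) (hj : j < A.length) :
    (pairReduce A i j).length = A.length - 1 := by
  simp only [pairReduce, List.length_append, List.length_eraseIdx, List.length_singleton]
  rw [if_pos hj, if_pos (by omega)]
  omega

noncomputable def evalSqrt : ℤ[T;T⁻¹] →+* (Set.Ioi (0 : ℝ) → ℝ) :=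
  RingHom.pi fun y =>
    (AddMonoidAlgebra.lift ℤ ℝ ℤ ((Units.coeHom ℝ).comp (zpowersHom ℝˣ
      (Units.mk0 _ (Real.rpow_pos_of_pos y.2 ((1 : ℝ) / 2)).ne')))).toRingHom

lemma evalSqrt_apply (P : ℤ[T;T⁻¹]) (y : Set.Ioi (0 : ℝ)) :
    evalSqrt P y = ∑ n ∈ P.coeff.support, (P.coeff n : ℝ) * ((y : ℝ) ^ ((1 : ℝ) / 2)) ^ n := by
  rw [evalSqrt, RingHom.pi_apply]
  simp [AddMonoidAlgebra.lift_apply', Finsupp.sum]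

lemma evalSqrt_T (n : ℤ) (y : Set.Ioi (0 : ℝ)) :
    evalSqrt (T n) y = ((y : ℝ) ^ ((1 : ℝ) / 2)) ^ n := by
  rw [evalSqrt, RingHom.pi_apply]
  exact (AddMonoidAlgebra.lift_single _ n 1).trans (by simp)

lemma evalSqrt_T_add_T_neg (α : ℤ) :
    evalSqrt (T α + T (-α)) = fun y : Set.Ioi (0 : ℝ) =>
      (y : ℝ) ^ ((α : ℝ) / 2) + (y : ℝ) ^ (-(α : ℝ) / 2) := by
  ext y
  rw [map_add, Pi.add_apply, evalSqrt_T, evalSqrt_T, ← rpow_intCast_div_two y.2,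
    ← rpow_intCast_div_two y.2, Int.cast_neg, neg_div]

lemma halfSum_mem_range_evalSqrt :
    (fun y : Set.Ioi (0 : ℝ) => (y : ℝ) ^ ((1 : ℝ) / 2) + (y : ℝ) ^ (-(1 : ℝ) / 2)) ∈
      evalSqrt.range :=
  ⟨T 1 + T (-1), by simpa using evalSqrt_T_add_T_neg 1⟩

lemma brP_mul_halfSum_mem_range_evalSqrt (α : ℤ) :
    (fun y : Set.Ioi (0 : ℝ) =>
      brP y α * ((y : ℝ) ^ ((1 : ℝ) / 2) + (y : ℝ) ^ (-(1 : ℝ) / 2))) ∈ evalSqrt.range := by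
  refine ⟨T α + T (-α), ?_⟩
  rw [evalSqrt_T_add_T_neg]
  ext y
  have hy : (y : ℝ) ^ ((1 : ℝ) / 2) + (y : ℝ) ^ (-(1 : ℝ) / 2) ≠ 0 := by
    have : (0 : ℝ) < y := y.2
    positivity
  rw [brP, div_mul_cancel₀ _ hy]

lemma muAux_succ_of_four_le {y : ℝ} {n : ℕ} {A : List (ℤ × ℤ)} (hA : 4 ≤ A.length) :
    muAux y (n + 1) A = ∑ i ∈ Finset.range A.length, ∑ j ∈ Finset.Ioo i A.length,
      muAux y n (pairReduce A i j) *
        muAux y n [A.getD i 0, A.getD j 0, -(A.getD i 0 + A.getD j 0)] := by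
  rw [muAux, if_neg (by omega), if_neg (by omega)]

theorem muAux_mul_halfSum_pow_mem_range_evalSqrt (n : ℕ) (A : List (ℤ × ℤ)) :
    (fun y : Set.Ioi (0 : ℝ) => muAux y n A *
      ((y : ℝ) ^ ((1 : ℝ) / 2) + (y : ℝ) ^ (-(1 : ℝ) / 2)) ^ (A.length - 2)) ∈
        evalSqrt.range := by
  induction n generalizing A with
  | zero =>
    simp only [muAux, one_mul]
    exact pow_mem halfSum_mem_range_evalSqrt _
  | succ n ih =>
    rcases show A.length ≤ 2 ∨ A.length = 3 ∨ 4 ≤ A.length by omega with hA | hA | hA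
    · simp only [muAux, if_pos hA, Nat.sub_eq_zero_of_le hA, pow_zero, mul_one]
      exact one_mem _
    · simp only [muAux, if_neg (show ¬A.length ≤ 2 by omega), if_pos hA]
      simp only [hA, Nat.reduceSub, pow_one]
      exact brP_mul_halfSum_mem_range_evalSqrt _
    · have hsplit : ∀ i ∈ Finset.range A.length, ∀ j ∈ Finset.Ioo i A.length,
          (pairReduce A i j).length - 2 + 1 = A.length - 2 := by
        intro i hi j hj
        rw [Finset.mem_Ioo] at hj
        rw [pairReduce_length hj.1 hj.2]
        omega
      have hsum : (fun y : Set.Ioi (0 : ℝ) => muAux y (n + 1) A *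
          ((y : ℝ) ^ ((1 : ℝ) / 2) + (y : ℝ) ^ (-(1 : ℝ) / 2)) ^ (A.length - 2)) =
          ∑ i ∈ Finset.range A.length, ∑ j ∈ Finset.Ioo i A.length,
            (fun y : Set.Ioi (0 : ℝ) => muAux y n (pairReduce A i j) *
              ((y : ℝ) ^ ((1 : ℝ) / 2) + (y : ℝ) ^ (-(1 : ℝ) / 2)) ^
                ((pairReduce A i j).length - 2)) *
            (fun y : Set.Ioi (0 : ℝ) =>
              muAux y n [A.getD i 0, A.getD j 0, -(A.getD i 0 + A.getD j 0)] *
              ((y : ℝ) ^ ((1 : ℝ) / 2) + (y : ℝ) ^ (-(1 : ℝ) / 2)) ^ (3 - 2)) := by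
        ext y
        simp only [muAux_succ_of_four_le hA, Finset.sum_apply, Pi.mul_apply, Finset.sum_mul]
        refine Finset.sum_congr rfl fun i hi => Finset.sum_congr rfl fun j hj => ?_
        rw [← hsplit i hi j hj]
        ring
      rw [hsum]
      exact Subring.sum_mem _ fun i _ => Subring.sum_mem _ fun j _ => mul_mem (ih _) (ih _)

theorem stmt10_general (A : List (ℤ × ℤ)) :
    ∃ (s : Finset ℤ) (c : ℤ → ℤ), ∀ y : ℝ, 0 < y →
      muPlus y A =
        (∑ n ∈ s, (c n : ℝ) * (y ^ ((1 : ℝ) / 2)) ^ n) /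
          (y ^ ((1 : ℝ) / 2) + y ^ (-(1 : ℝ) / 2)) ^ (A.length - 2) := by
  obtain ⟨P, hP⟩ := muAux_mul_halfSum_pow_mem_range_evalSqrt A.length A
  refine ⟨P.coeff.support, P.coeff, fun y hy => ?_⟩
  have hD : (y ^ ((1 : ℝ) / 2) + y ^ (-(1 : ℝ) / 2)) ^ (A.length - 2) ≠ 0 := by positivity
  rw [muPlus, eq_div_iff hD, ← evalSqrt_apply P ⟨y, hy⟩, hP]

/-- for a sequence `A` of `r ≥ 3` vectors in `ℤ²` there is a Laurent
polynomial `P ∈ ℤ[t,t⁻¹]` (encoded by its finite support `s` and coefficients `c`)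
such that `μ⁺_y(A) = P(y^{1/2}) / (y^{1/2} + y^{−1/2})^{r−2}` for all `y > 0`. -/
theorem stmt10 (A : List (ℤ × ℤ)) (hr : 3 ≤ A.length) :
    ∃ (s : Finset ℤ) (c : ℤ → ℤ), ∀ y : ℝ, 0 < y →
      muPlus y A =
        (∑ n ∈ s, (c n : ℝ) * (y ^ ((1 : ℝ) / 2)) ^ n) /
          (y ^ ((1 : ℝ) / 2) + y ^ (-(1 : ℝ) / 2)) ^ (A.length - 2) :=
  stmt10_general A
end
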